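/- arXiv:math/9808043 — 2 statements merged into one kernel-verified Lean document; each statement's English description precedes it below -/
import Mathlib

section
/- On smooth functions φ(x,t), the operators ℋ = Δ_t (forward time difference with step τ), 𝒫 = ∂_x, 𝓜 = m, and 𝒦 = 2t·∂_x·T_t^{-1} + 2mx satisfy the Galilei relations [𝒦,𝒫] = −2𝓜, [𝒦,ℋ] = −2𝒫, [ℋ,𝒫] = 0. -/
noncomputable section

/-- Forward time difference with step `τ`. -/
def Dtd (τ : ℝ) (φ : ℝ → ℝ → ℝ) : ℝ → ℝ → ℝ := fun x t => (φ x (t + τ) - φ x t) / τ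

/-- Inverse time shift `T_t^{-1}`. -/
def Ttinv (τ : ℝ) (φ : ℝ → ℝ → ℝ) : ℝ → ℝ → ℝ := fun x t => φ x (t - τ)

/-- Space derivative `∂_x`. -/
def Px (φ : ℝ → ℝ → ℝ) : ℝ → ℝ → ℝ := fun x t => deriv (fun y => φ y t) x

/-- Discrete-time Galilean boost `𝒦 = 2t·∂_x·T_t^{-1} + 2mx`. -/
def Kop (τ m : ℝ) (φ : ℝ → ℝ → ℝ) : ℝ → ℝ → ℝ :=
  fun x t => 2 * t * Px (Ttinv τ φ) x t + 2 * m * x * φ x t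

theorem discrete_time_galilei_relations (τ m : ℝ) (hτ : τ ≠ 0)
    (φ : ℝ → ℝ → ℝ) (hφ : ContDiff ℝ (⊤ : ℕ∞) (fun p : ℝ × ℝ => φ p.1 p.2)) :
    (∀ x t, Kop τ m (Px φ) x t - Px (Kop τ m φ) x t = -2 * (m * φ x t)) ∧
    (∀ x t, Kop τ m (Dtd τ φ) x t - Dtd τ (Kop τ m φ) x t = -2 * Px φ x t) ∧
    (∀ x t, Dtd τ (Px φ) x t - Px (Dtd τ φ) x t = 0) := by
  have h1 : ∀ s : ℝ, ContDiff ℝ (⊤ : ℕ∞) (fun y : ℝ => φ y s) := fun s =>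
    hφ.comp (contDiff_id.prodMk contDiff_const)
  have hd : ∀ s : ℝ, ∀ y : ℝ, DifferentiableAt ℝ (fun y : ℝ => φ y s) y := fun s y =>
    ((h1 s).differentiable (by simp)) y
  have hd' : ∀ s : ℝ, ∀ y : ℝ, DifferentiableAt ℝ (deriv (fun y : ℝ => φ y s)) y := fun s y =>
    (((contDiff_infty_iff_deriv.mp ((h1 s).of_le (by simp))).2).differentiable (by norm_num)) y
  refine ⟨?_, ?_, ?_⟩
  · intro x t
    simp only [Kop, Px, Ttinv]
    rw [deriv_fun_add ((differentiableAt_const _).fun_mul (hd' _ x))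
          (((differentiableAt_const _).fun_mul differentiableAt_fun_id).fun_mul (hd _ x)),
        deriv_const_mul _ (hd' _ x),
        deriv_fun_mul ((differentiableAt_const _).fun_mul differentiableAt_fun_id) (hd _ x)]
    have hdid : deriv (fun y : ℝ => 2 * m * y) x = 2 * m := by
      simpa using ((hasDerivAt_id x).const_mul (2 * m)).deriv
    simp
    ring
  · intro x t
    simp only [Kop, Px, Ttinv, Dtd]
    have e1 : deriv (fun y => (φ y (t - τ + τ) - φ y (t - τ)) / τ) x
        = (deriv (fun y => φ y (t - τ + τ)) x - deriv (fun y => φ y (t - τ)) x) / τ := by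
      simp only [div_eq_mul_inv]
      rw [deriv_mul_const ((hd _ x).fun_sub (hd _ x)), deriv_fun_sub (hd _ x) (hd _ x)]
    rw [e1]
    have e2 : t - τ + τ = t := by ring
    have e3 : t + τ - τ = t := by ring
    rw [e2, e3]
    field_simp
    ring
  · intro x t
    simp only [Dtd, Px]
    have e1 : deriv (fun y => (φ y (t + τ) - φ y t) / τ) x
        = (deriv (fun y => φ y (t + τ)) x - deriv (fun y => φ y t) x) / τ := by
      simp only [div_eq_mul_inv]
      rw [deriv_mul_const ((hd _ x).fun_sub (hd _ x)), deriv_fun_sub (hd _ x) (hd _ x)]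
    rw [e1]
    ring
end
end

section
/- The operator E = ∂_x² − 2m·Δ_t commutes with each of 𝒦 = 2t∂_x T_t^{-1} + 2mx, ℋ = Δ_t, 𝒫 = ∂_x, and 𝓜 = m; moreover 𝒟 = 2tΔ_t T_t^{-1} + x∂_x + 1/2 satisfies [E, 𝒟] = 2E, and 𝒞 = t²Δ_t T_t^{-2} + tx∂_x T_t^{-1} + (1/2)mx² + t(T_t^{-2} − (1/2)T_t^{-1}) satisfies [E, 𝒞] = 2t·T_t^{-1}·E. -/
noncomputable section

/-- Multiplication by the constant `m`. -/
def Mop (m : ℝ) (φ : ℝ → ℝ → ℝ) : ℝ → ℝ → ℝ := fun x t => m * φ x t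

/-- Discrete-time dilation `𝒟 = 2tΔ_t T_t^{-1} + x∂_x + 1/2`. -/
def Dop (τ : ℝ) (φ : ℝ → ℝ → ℝ) : ℝ → ℝ → ℝ :=
  fun x t => 2 * t * Dtd τ (Ttinv τ φ) x t + x * Px φ x t + (1/2) * φ x t

/-- Discrete-time conformal generator
`𝒞 = t²Δ_t T_t^{-2} + tx∂_x T_t^{-1} + (1/2)mx² + t(T_t^{-2} − (1/2)T_t^{-1})`. -/
def Cop (τ m : ℝ) (φ : ℝ → ℝ → ℝ) : ℝ → ℝ → ℝ :=
  fun x t => t^2 * Dtd τ (Ttinv τ (Ttinv τ φ)) x t + t * x * Px (Ttinv τ φ) x t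
    + (1/2) * m * x^2 * φ x t
    + t * (Ttinv τ (Ttinv τ φ) x t - (1/2) * Ttinv τ φ x t)

/-- Time-discretized Schrödinger operator `E = ∂_x² − 2mΔ_t`. -/
def Eop (τ m : ℝ) (φ : ℝ → ℝ → ℝ) : ℝ → ℝ → ℝ :=
  fun x t => Px (Px φ) x t - 2 * m * Dtd τ φ x t

def S (φ : ℝ → ℝ → ℝ) : Prop := ContDiff ℝ (⊤ : ℕ∞) (fun p : ℝ × ℝ => φ p.1 p.2)

lemma S.tt {φ : ℝ → ℝ → ℝ} {τ : ℝ} (h : S φ) : S (Ttinv τ φ) := by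
  have : (fun p : ℝ × ℝ => Ttinv τ φ p.1 p.2)
      = (fun p : ℝ × ℝ => φ p.1 p.2) ∘ (fun p : ℝ × ℝ => (p.1, p.2 - τ)) := rfl
  rw [S, this]
  exact h.comp (by fun_prop)

lemma S.px {φ : ℝ → ℝ → ℝ} (h : S φ) : S (Px φ) := by
  have h1 : ContDiff ℝ (⊤ : ℕ∞) (Function.uncurry (fun (p : ℝ × ℝ) (y : ℝ) => φ y p.2)) := by
    have : Function.uncurry (fun (p : ℝ × ℝ) (y : ℝ) => φ y p.2)
        = (fun p : ℝ × ℝ => φ p.1 p.2) ∘ (fun q : (ℝ × ℝ) × ℝ => (q.2, q.1.2)) := rfl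
    rw [this]
    exact h.comp (by fun_prop)
  have h2 : ContDiff ℝ (⊤ : ℕ∞) fun p : ℝ × ℝ =>
      fderiv ℝ (fun y : ℝ => φ y p.2) p.1 (1 : ℝ) :=
    h1.fderiv_apply contDiff_fst contDiff_const (by simp)
  have h3 : (fun p : ℝ × ℝ => Px φ p.1 p.2)
      = fun p : ℝ × ℝ => fderiv ℝ (fun y : ℝ => φ y p.2) p.1 (1 : ℝ) := by
    funext p
    exact fderiv_apply_one_eq_deriv.symm
  rw [S, h3]
  exact h2

lemma S.hd {φ : ℝ → ℝ → ℝ} (h : S φ) (x t : ℝ) :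
    HasDerivAt (fun y => φ y t) (Px φ x t) x := by
  have hd : DifferentiableAt ℝ (fun y => φ y t) x :=
    ((h.differentiable (by simp)).comp
      (by fun_prop : Differentiable ℝ (fun y : ℝ => (y, t)))).differentiableAt
  exact hd.hasDerivAt

lemma Px_tt (τ : ℝ) (φ : ℝ → ℝ → ℝ) (x t : ℝ) :
    Px (Ttinv τ φ) x t = Px φ x (t - τ) := rfl

section calcs
variable {φ : ℝ → ℝ → ℝ} {τ m : ℝ}

lemma PE (h : S φ) : Px (Eop τ m φ) = fun x t =>
    Px (Px (Px φ)) x t - 2 * m * ((Px φ x (t + τ) - Px φ x t) / τ) := by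
  funext x t
  have H := (h.px.px.hd x t).sub
    ((((h.hd x (t + τ)).sub (h.hd x t)).div_const τ).const_mul (2 * m))
  exact H.deriv.trans (by ring)

lemma Pdtd (h : S φ) : Px (Dtd τ φ) = fun x t =>
    (Px φ x (t + τ) - Px φ x t) / τ := by
  funext x t
  have H := ((h.hd x (t + τ)).sub (h.hd x t)).div_const τ
  exact H.deriv.trans (by ring)

lemma PPdtd (h : S φ) : Px (Px (Dtd τ φ)) = fun x t =>
    (Px (Px φ) x (t + τ) - Px (Px φ) x t) / τ := by
  funext x t
  rw [Pdtd h]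
  have H := ((h.px.hd x (t + τ)).sub (h.px.hd x t)).div_const τ
  exact H.deriv.trans (by ring)

lemma PM (h : S φ) : Px (Mop m φ) = fun x t => m * Px φ x t := by
  funext x t
  exact ((h.hd x t).const_mul m).deriv.trans (by ring)

lemma PPM (h : S φ) : Px (Px (Mop m φ)) = fun x t => m * Px (Px φ) x t := by
  funext x t
  rw [PM h]
  exact ((h.px.hd x t).const_mul m).deriv.trans (by ring)

lemma PK (h : S φ) : Px (Kop τ m φ) = fun x t =>
    2 * t * Px (Px φ) x (t - τ) + 2 * m * φ x t + 2 * m * x * Px φ x t := by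
  funext x t
  have H := ((h.px.hd x (t - τ)).const_mul (2 * t)).add
    (((hasDerivAt_id' (x := x)).const_mul (2 * m)).mul (h.hd x t))
  exact H.deriv.trans (by ring)

lemma PPK (h : S φ) : Px (Px (Kop τ m φ)) = fun x t =>
    2 * t * Px (Px (Px φ)) x (t - τ) + 4 * m * Px φ x t + 2 * m * x * Px (Px φ) x t := by
  funext x t
  rw [PK h]
  have H := (((h.px.px.hd x (t - τ)).const_mul (2 * t)).add
      ((h.hd x t).const_mul (2 * m))).add
    (((hasDerivAt_id' (x := x)).const_mul (2 * m)).mul (h.px.hd x t))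
  exact H.deriv.trans (by ring)

lemma PD (h : S φ) : Px (Dop τ φ) = fun x t =>
    2 * t * ((Px φ x (t + τ - τ) - Px φ x (t - τ)) / τ)
      + (Px φ x t + x * Px (Px φ) x t) + (1/2) * Px φ x t := by
  funext x t
  have H := ((((h.hd x (t + τ - τ)).sub (h.hd x (t - τ))).div_const τ).const_mul (2 * t)).add
      ((hasDerivAt_id' (x := x)).mul (h.px.hd x t)) |>.add
    ((h.hd x t).const_mul (1/2))
  exact H.deriv.trans (by ring)

lemma PPD (h : S φ) : Px (Px (Dop τ φ)) = fun x t =>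
    2 * t * ((Px (Px φ) x (t + τ - τ) - Px (Px φ) x (t - τ)) / τ)
      + 2 * Px (Px φ) x t + x * Px (Px (Px φ)) x t + (1/2) * Px (Px φ) x t := by
  funext x t
  rw [PD h]
  have H := ((((h.px.hd x (t + τ - τ)).sub (h.px.hd x (t - τ))).div_const τ).const_mul
      (2 * t)).add
      ((h.px.hd x t).add ((hasDerivAt_id' (x := x)).mul (h.px.px.hd x t))) |>.add
    ((h.px.hd x t).const_mul (1/2))
  exact H.deriv.trans (by ring)

lemma PC (h : S φ) : Px (Cop τ m φ) = fun x t =>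
    t^2 * ((Px φ x (t + τ - τ - τ) - Px φ x (t - τ - τ)) / τ)
      + (t * Px φ x (t - τ) + t * x * Px (Px φ) x (t - τ))
      + (m * x * φ x t + (1/2) * m * x^2 * Px φ x t)
      + t * (Px φ x (t - τ - τ) - (1/2) * Px φ x (t - τ)) := by
  funext x t
  have H := (((((h.hd x (t + τ - τ - τ)).sub (h.hd x (t - τ - τ))).div_const τ).const_mul
        (t^2)).add
      ((((hasDerivAt_id' (x := x)).const_mul t).mul (h.px.hd x (t - τ)))) |>.add
      (((hasDerivAt_pow 2 x).const_mul (1/2 * m)).mul (h.hd x t))).add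
    (((h.hd x (t - τ - τ)).sub ((h.hd x (t - τ)).const_mul (1/2))).const_mul t)
  exact H.deriv.trans (by push_cast [pow_one]; ring)

lemma PPC (h : S φ) : Px (Px (Cop τ m φ)) = fun x t =>
    t^2 * ((Px (Px φ) x (t + τ - τ - τ) - Px (Px φ) x (t - τ - τ)) / τ)
      + 2 * t * Px (Px φ) x (t - τ) + t * x * Px (Px (Px φ)) x (t - τ)
      + m * φ x t + 2 * m * x * Px φ x t + (1/2) * m * x^2 * Px (Px φ) x t
      + t * (Px (Px φ) x (t - τ - τ) - (1/2) * Px (Px φ) x (t - τ)) := by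
  funext x t
  rw [PC h]
  have H := (((((h.px.hd x (t + τ - τ - τ)).sub (h.px.hd x (t - τ - τ))).div_const τ).const_mul
        (t^2)).add
      (((h.px.hd x (t - τ)).const_mul t).add
        (((hasDerivAt_id' (x := x)).const_mul t).mul (h.px.px.hd x (t - τ)))) |>.add
      ((((hasDerivAt_id' (x := x)).const_mul m).mul (h.hd x t)).add
        (((hasDerivAt_pow 2 x).const_mul (1/2 * m)).mul (h.px.hd x t)))).add
    (((h.px.hd x (t - τ - τ)).sub ((h.px.hd x (t - τ)).const_mul (1/2))).const_mul t)
  exact H.deriv.trans (by push_cast [pow_one]; ring)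
end calcs


theorem discrete_time_schrodinger_symmetries (τ m : ℝ) (hτ : τ ≠ 0)
    (φ : ℝ → ℝ → ℝ) (hφ : ContDiff ℝ (⊤ : ℕ∞) (fun p : ℝ × ℝ => φ p.1 p.2)) :
    (∀ x t, Eop τ m (Kop τ m φ) x t - Kop τ m (Eop τ m φ) x t = 0) ∧
    (∀ x t, Eop τ m (Dtd τ φ) x t - Dtd τ (Eop τ m φ) x t = 0) ∧
    (∀ x t, Eop τ m (Px φ) x t - Px (Eop τ m φ) x t = 0) ∧
    (∀ x t, Eop τ m (Mop m φ) x t - Mop m (Eop τ m φ) x t = 0) ∧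
    (∀ x t, Eop τ m (Dop τ φ) x t - Dop τ (Eop τ m φ) x t = 2 * Eop τ m φ x t) ∧
    (∀ x t, Eop τ m (Cop τ m φ) x t - Cop τ m (Eop τ m φ) x t
      = 2 * t * Ttinv τ (Eop τ m φ) x t) := by
  have h : S φ := hφ
  refine ⟨fun x t => ?_, fun x t => ?_, fun x t => ?_, fun x t => ?_, fun x t => ?_,
    fun x t => ?_⟩
  · -- Kop
    rw [show Eop τ m (Kop τ m φ) x t
        = Px (Px (Kop τ m φ)) x t - 2 * m * Dtd τ (Kop τ m φ) x t from rfl, PPK h]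
    rw [show Kop τ m (Eop τ m φ) x t
        = 2 * t * Px (Ttinv τ (Eop τ m φ)) x t + 2 * m * x * Eop τ m φ x t from rfl]
    rw [Px_tt, PE h]
    simp only [Kop, Dtd]
    try simp only [Px_tt]
    simp only [Eop, Dtd, Ttinv]
    simp only [add_sub_cancel_right, sub_add_cancel]
    field_simp
    try ring
  · -- Dtd
    rw [show Eop τ m (Dtd τ φ) x t
        = Px (Px (Dtd τ φ)) x t - 2 * m * Dtd τ (Dtd τ φ) x t from rfl, PPdtd h]
    simp only [Eop, Dtd]
    field_simp
    try ring
  · -- Px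
    rw [PE h]
    simp only [Eop, Dtd]
    field_simp
    try ring
  · -- Mop
    rw [show Eop τ m (Mop m φ) x t
        = Px (Px (Mop m φ)) x t - 2 * m * Dtd τ (Mop m φ) x t from rfl, PPM h]
    simp only [Mop, Eop, Dtd]
    field_simp
    try ring
  · -- Dop
    rw [show Eop τ m (Dop τ φ) x t
        = Px (Px (Dop τ φ)) x t - 2 * m * Dtd τ (Dop τ φ) x t from rfl, PPD h]
    rw [show Dop τ (Eop τ m φ) x t
        = 2 * t * Dtd τ (Ttinv τ (Eop τ m φ)) x t + x * Px (Eop τ m φ) x t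
          + (1/2) * Eop τ m φ x t from rfl]
    rw [PE h]
    simp only [Dop, Dtd]
    try simp only [Px_tt]
    simp only [Eop, Dtd, Ttinv]
    simp only [add_sub_cancel_right, sub_add_cancel]
    field_simp
    try ring
  · -- Cop
    rw [show Eop τ m (Cop τ m φ) x t
        = Px (Px (Cop τ m φ)) x t - 2 * m * Dtd τ (Cop τ m φ) x t from rfl, PPC h]
    rw [show Cop τ m (Eop τ m φ) x t
        = t^2 * Dtd τ (Ttinv τ (Ttinv τ (Eop τ m φ))) x t
          + t * x * Px (Ttinv τ (Eop τ m φ)) x t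
          + (1/2) * m * x^2 * Eop τ m φ x t
          + t * (Ttinv τ (Ttinv τ (Eop τ m φ)) x t - (1/2) * Ttinv τ (Eop τ m φ) x t)
        from rfl]
    rw [Px_tt, PE h]
    simp only [Cop, Dtd]
    try simp only [Px_tt]
    simp only [Eop, Dtd, Ttinv]
    simp only [add_sub_cancel_right, sub_add_cancel]
    field_simp
    try ring
end
end
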